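/- arXiv:2312.03241 — 4 statements merged into one kernel-verified Lean document; each statement's English description precedes it below -/
import Mathlib

section
/- Let f : [0,∞) → ℝ be a nonnegative C¹ function with f ∈ L¹([0,∞)) such that f'(t) ≤ (1+t)^{-α} for all t ≥ 0, where 0 < α ≤ 2. Then there exists a constant C > 0 such that f(t) ≤ C·(1+t)^{-α/2} for all t ≥ 0. -/
open MeasureTheory Set

set_option maxHeartbeats 1600000 in
/-- Area inequality: if `f` is a nonnegative `C¹` function on `[0,∞)`,
integrable on `[0,∞)`, whose derivative satisfies
`f'(t) ≤ (1+t)^(-α)` with `0 < α ≤ 2`, then `f(t) ≤ C (1+t)^(-α/2)`. -/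
theorem stmt_2 (α : ℝ) (hα0 : 0 < α) (hα2 : α ≤ 2) (f : ℝ → ℝ)
    (hf_nonneg : ∀ t ∈ Ici (0 : ℝ), 0 ≤ f t)
    (hf_C1 : ContDiffOn ℝ 1 f (Ici 0))
    (hf_int : IntegrableOn f (Ici 0))
    (hf_deriv : ∀ t ∈ Ici (0 : ℝ), derivWithin f (Ici 0) t ≤ (1 + t) ^ (-α)) :
    ∃ C : ℝ, 0 < C ∧ ∀ t ∈ Ici (0 : ℝ), f t ≤ C * (1 + t) ^ (-α / 2) := by
  have hfc : ContinuousOn f (Ici 0) := hf_C1.continuousOn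
  obtain ⟨x₀, hx₀, hKmax'⟩ := (isCompact_Icc : IsCompact (Icc (0:ℝ) 1)).exists_isMaxOn
    (nonempty_Icc.2 zero_le_one) (hfc.mono (fun y hy => hy.1))
  have hKmax : ∀ y ∈ Icc (0:ℝ) 1, f y ≤ f x₀ := hKmax'
  set K := f x₀ with hK
  have hK0 : 0 ≤ K := hf_nonneg x₀ hx₀.1
  set I := ∫ x in Ici (0:ℝ), f x with hI
  have hI0 : 0 ≤ I := setIntegral_nonneg measurableSet_Ici hf_nonneg
  refine ⟨4 + 4*I + 2*K + 1, by positivity, ?_⟩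
  intro t ht
  have ht0 : (0:ℝ) ≤ t := ht
  have h1t : (0:ℝ) < 1 + t := by linarith
  have hpow_pos : (0:ℝ) < (1+t) ^ (-α/2) := Real.rpow_pos_of_pos h1t _
  have hC4 : (4:ℝ) ≤ 4 + 4*I + 2*K + 1 := by nlinarith
  rcases le_or_gt t 1 with ht1 | ht1
  · -- small t : use the bound K on [0,1]
    have h2 : (1+t) ≤ 2 := by linarith
    have ha : (2:ℝ)^(-α/2) ≤ (1+t)^(-α/2) :=
      Real.rpow_le_rpow_of_nonpos h1t h2 (by linarith)
    have hb : (2:ℝ)^(-1:ℝ) ≤ (2:ℝ)^(-α/2) :=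
      Real.rpow_le_rpow_of_exponent_le one_le_two (by linarith)
    have h2i : (2:ℝ)^(-1:ℝ) = 1/2 := by
      rw [Real.rpow_neg_one]; norm_num
    have hhalf : (1/2 : ℝ) ≤ (1+t)^(-α/2) := by rw [← h2i]; exact hb.trans ha
    have hfK : f t ≤ K := hKmax t ⟨ht0, ht1⟩
    calc f t ≤ K := hfK
      _ = 2*K * (1/2) := by ring
      _ ≤ 2*K * ((1+t)^(-α/2)) := mul_le_mul_of_nonneg_left hhalf (by linarith)
      _ ≤ (4 + 4*I + 2*K + 1) * (1+t)^(-α/2) := by nlinarith [hpow_pos.le, hpow_pos]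
  · -- t > 1
    by_cases hM : f t ≤ 4 * (1+t)^(-α/2)
    · exact hM.trans (mul_le_mul_of_nonneg_right hC4 hpow_pos.le)
    push_neg at hM
    set M := f t with hMdef
    set P := (1+t)^(α/2) with hP
    have hPpos : 0 < P := Real.rpow_pos_of_pos h1t _
    have hPle : P ≤ 1 + t := by
      calc P ≤ (1+t)^(1:ℝ) := Real.rpow_le_rpow_of_exponent_le (by linarith) (by linarith)
        _ = 1 + t := Real.rpow_one _
    set δ := P/2 with hδ
    have hδpos : 0 < δ := by positivity
    have hδle : δ ≤ (1+t)/2 := by rw [hδ]; linarith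
    have hδt : δ ≤ t := by linarith
    set s := t - δ with hs
    have hs0 : 0 ≤ s := by rw [hs]; linarith
    have hst : s < t := by rw [hs]; linarith
    have h1s : (1+t)/2 ≤ 1 + s := by rw [hs]; linarith
    have h1spos : 0 < 1 + s := by linarith
    set B := (1+s)^(-α) with hB
    have hB0 : 0 ≤ B := (Real.rpow_pos_of_pos h1spos _).le
    have hBbound : δ * B ≤ 2 * (1+t)^(-α/2) := by
      have h1 : B ≤ ((1+t)/2)^(-α) :=
        Real.rpow_le_rpow_of_nonpos (by linarith) h1s (by linarith)
      have h2 : ((1+t)/2 : ℝ)^(-α) = (1+t)^(-α) * 2^α := by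
        rw [Real.div_rpow (by linarith) (by norm_num),
          Real.rpow_neg (by norm_num : (0:ℝ) ≤ 2)]
        field_simp
      have h3 : (2:ℝ)^α ≤ 4 := by
        have h4 := Real.rpow_le_rpow_of_exponent_le one_le_two hα2
        rwa [show ((2:ℝ)^(2:ℝ)) = 4 by rw [Real.rpow_two]; norm_num] at h4
      have h4 : P * (1+t)^(-α) = (1+t)^(-α/2) := by
        rw [hP, ← Real.rpow_add h1t]; ring_nf
      have hpos : (0:ℝ) < (1+t)^(-α) := Real.rpow_pos_of_pos h1t _
      calc δ * B ≤ δ * ((1+t)^(-α) * 2^α) := by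
            rw [← h2]; exact mul_le_mul_of_nonneg_left h1 hδpos.le
        _ ≤ δ * ((1+t)^(-α) * 4) := by nlinarith
        _ = 2 * (P * (1+t)^(-α)) := by rw [hδ]; ring
        _ = 2 * (1+t)^(-α/2) := by rw [h4]
    have hδB : δ * B < M/2 := by
      have : 2 * (1+t)^(-α/2) < M/2 := by linarith
      linarith
    -- one-sided mean value estimate via monotonicity of  B*x - f x
    have hdiffat : ∀ x ∈ Ioo s t, DifferentiableAt ℝ f x := by
      intro x hx
      have hx0 : 0 < x := lt_of_le_of_lt hs0 hx.1
      exact ((hf_C1.differentiableOn one_ne_zero) x hx0.le).differentiableAt (Ici_mem_nhds hx0)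
    have hmono : MonotoneOn (fun x => B * x - f x) (Icc s t) := by
      apply monotoneOn_of_deriv_nonneg (convex_Icc s t)
      · exact (continuousOn_const.mul continuousOn_id).sub
          (hfc.mono (fun y hy => le_trans hs0 hy.1))
      · intro x hx
        rw [interior_Icc] at hx
        exact ((differentiableAt_fun_id.const_mul B).sub (hdiffat x hx)).differentiableWithinAt
      · intro x hx
        rw [interior_Icc] at hx
        have hx0 : 0 < x := lt_of_le_of_lt hs0 hx.1
        have hdx := hdiffat x hx
        have hderiv : deriv f x ≤ (1+x)^(-α) := by
          rw [← derivWithin_of_mem_nhds (Ici_mem_nhds hx0)]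
          exact hf_deriv x hx0.le
        have hmon : (1+x)^(-α) ≤ B :=
          Real.rpow_le_rpow_of_nonpos h1spos (by linarith [hx.1]) (by linarith)
        have hcalc : deriv (fun x => B * x - f x) x = B - deriv f x := by
          rw [deriv_fun_sub ((differentiableAt_fun_id.const_mul B)) hdx,
            deriv_const_mul _ differentiableAt_fun_id, deriv_id'']
          ring
        rw [hcalc]
        linarith
    have hlow : ∀ u ∈ Icc s t, M/2 ≤ f u := by
      intro u hu
      have hgut : B*u - f u ≤ B*t - M := hmono hu (right_mem_Icc.2 hst.le) hu.2
      have htu : t - u ≤ δ := by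
        have := hu.1; rw [hs] at this; linarith
      nlinarith [mul_le_mul_of_nonneg_left htu hB0]
    have hmeas : (volume (Icc s t)).toReal = δ := by
      rw [Real.volume_Icc, ENNReal.toReal_ofReal (by linarith)]
      rw [hs]; ring
    have hint1 : IntegrableOn f (Icc s t) :=
      hf_int.mono_set (fun y hy => le_trans hs0 hy.1)
    have h1 : M/2 * δ ≤ ∫ x in Icc s t, f x := by
      have := setIntegral_ge_of_const_le measurableSet_Icc
        (by rw [Real.volume_Icc]; exact ENNReal.ofReal_ne_top) hlow hint1
      rw [measureReal_def, hmeas, smul_eq_mul] at this; linarith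
    have h2 : ∫ x in Icc s t, f x ≤ I := by
      apply setIntegral_mono_set hf_int
      · exact (ae_restrict_iff' measurableSet_Ici).2 (Filter.Eventually.of_forall hf_nonneg)
      · exact HasSubset.Subset.eventuallyLE (fun y hy => le_trans hs0 hy.1)
    have hMP : M * P ≤ 4 * I := by nlinarith
    have hPinv : (1+t)^(-α/2) = P⁻¹ := by
      rw [neg_div, Real.rpow_neg h1t.le, hP]
    rw [hPinv]
    have h6 : M * P * P⁻¹ ≤ 4 * I * P⁻¹ :=
      mul_le_mul_of_nonneg_right hMP (inv_nonneg.2 hPpos.le)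
    rw [mul_assoc, mul_inv_cancel₀ hPpos.ne', mul_one] at h6
    have h7 : 4 * I * P⁻¹ ≤ (4 + 4*I + 2*K + 1) * P⁻¹ :=
      mul_le_mul_of_nonneg_right (by linarith) (inv_nonneg.2 hPpos.le)
    exact le_trans h6 h7
end

section
/- Let 1 < m ≤ 4/3 and p ≥ 2. There exists a constant C > 0 such that for all w ∈ H¹(ℝ) with w' ∈ L^{m+1}(ℝ), ∫_ℝ |w|^{p-1} (w')² dx ≤ C · ‖w‖_{L^{(2-m)/(m-1)}}^{2-m} · ∫_ℝ |w|^{p-2} |w'|^{m+1} dx. -/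
open MeasureTheory Real
open scoped ENNReal

lemma memLp_of_integrable_rpow {f : ℝ → ℝ} {r : ℝ} (hr : 0 < r)
    (hmeas : AEStronglyMeasurable f (volume : Measure ℝ))
    (hint : Integrable (fun x => |f x| ^ r) volume) :
    MemLp f (ENNReal.ofReal r) volume := by
  have hq0 : (ENNReal.ofReal r) ≠ 0 := by simp [hr, hr.not_ge]
  have hqt : (ENNReal.ofReal r) ≠ ⊤ := ENNReal.ofReal_ne_top
  have h1 : MemLp (fun x => ‖f x‖ ^ (ENNReal.ofReal r).toReal)
      ((ENNReal.ofReal r) / (ENNReal.ofReal r)) volume := by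
    rw [ENNReal.div_self hq0 hqt, memLp_one_iff_integrable]
    have : (ENNReal.ofReal r).toReal = r := ENNReal.toReal_ofReal hr.le
    rw [this]
    simpa [Real.norm_eq_abs] using hint
  exact (memLp_norm_rpow_iff hmeas hq0 hqt).mp h1

lemma integrable_mul_conj {f g : ℝ → ℝ} {r s : ℝ} (hrs : r.HolderConjugate s)
    (hf : MemLp f (ENNReal.ofReal r) volume) (hg : MemLp g (ENNReal.ofReal s) volume) :
    Integrable (fun x => f x * g x) volume := by
  rw [← memLp_one_iff_integrable]
  have h : (1 : ℝ≥0∞) / 1 = 1 / ENNReal.ofReal r + 1 / ENNReal.ofReal s := by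
    simp only [one_div]
    rw [← ENNReal.ofReal_inv_of_pos hrs.pos, ← ENNReal.ofReal_inv_of_pos hrs.symm.pos,
      ← ENNReal.ofReal_add (inv_nonneg.mpr hrs.pos.le) (inv_nonneg.mpr hrs.symm.pos.le),
      hrs.inv_add_inv_eq_one]
    simp
  exact hg.smul (φ := f) hf (hpqr := ⟨by simpa [one_div] using h.symm⟩)

lemma sup_bound {w : ℝ → ℝ} (hw : Differentiable ℝ w)
    (hw2 : Integrable (fun x => (w x) ^ 2) volume)
    {a : ℝ} (ha : 1 < a)
    (hint : Integrable (fun x => |w x| ^ (a - 1) * |deriv w x|) volume) :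
    ∀ y : ℝ, |w y| ^ a ≤ a * ∫ x, |w x| ^ (a - 1) * |deriv w x| := by
  set D : ℝ → ℝ := fun x => a * |w x| ^ (a - 2) * w x * deriv w x with hD
  have hderiv : ∀ x, HasDerivAt (fun t => |w t| ^ a) (D x) x := by
    intro x
    have h1 := (hasDerivAt_abs_rpow (w x) ha).comp x (hw x).hasDerivAt
    simpa [hD, mul_assoc, Function.comp_def] using h1
  have hDbound : ∀ x, |D x| ≤ a * (|w x| ^ (a - 1) * |deriv w x|) := by
    intro x
    have e1 : |D x| = |a| * abs (|w x| ^ (a - 2)) * |w x| * |deriv w x| := by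
      simp only [hD, abs_mul]
    rcases eq_or_ne (w x) 0 with h | h
    · rw [e1]; simp [h, Real.zero_rpow (by intro h'; linarith : a - 1 ≠ 0)]
    · have h2 : |w x| ^ (a - 2) * |w x| = |w x| ^ (a - 1) := by
        rw [← Real.rpow_add_one (abs_ne_zero.mpr h)]; ring_nf
      rw [e1, abs_of_pos (by linarith : (0:ℝ) < a),
        abs_of_nonneg (Real.rpow_nonneg (abs_nonneg _) _), mul_assoc a, h2, mul_assoc]
  have hDmeas : AEStronglyMeasurable D volume := by
    have h1 : Measurable (deriv w) := measurable_deriv w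
    have h2 : Measurable w := hw.continuous.measurable
    exact (((measurable_const.mul (h2.abs.pow measurable_const)).mul h2).mul
      h1).aestronglyMeasurable
  have hDint : Integrable D volume := by
    refine Integrable.mono' (hint.const_mul a) hDmeas (Filter.Eventually.of_forall fun x => ?_)
    rw [Real.norm_eq_abs]; exact hDbound x
  intro y
  have key : ∀ x, |w x| ^ a = |w y| ^ a - ∫ t in x..y, D t := by
    intro x
    have := intervalIntegral.integral_eq_sub_of_hasDerivAt
      (f := fun t => |w t| ^ a) (f' := D) (a := x) (b := y)
      (fun t _ => hderiv t) hDint.intervalIntegrable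
    linarith [this]
  have hlim : Filter.Tendsto (fun x : ℝ => |w x| ^ a) Filter.atBot
      (nhds (|w y| ^ a - ∫ t in Set.Iic y, D t)) := by
    have h1 : Filter.Tendsto (fun x : ℝ => ∫ t in x..y, D t) Filter.atBot
        (nhds (∫ t in Set.Iic y, D t)) :=
      MeasureTheory.intervalIntegral_tendsto_integral_Iic y hDint.integrableOn
        Filter.tendsto_id
    exact ((tendsto_const_nhds (x := |w y| ^ a)).sub h1).congr fun x => (key x).symm
  set L := |w y| ^ a - ∫ t in Set.Iic y, D t with hL
  have hLnonneg : 0 ≤ L :=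
    ge_of_tendsto hlim (Filter.Eventually.of_forall fun x =>
      Real.rpow_nonneg (abs_nonneg _) _)
  have hL0 : L = 0 := by
    rcases hLnonneg.eq_or_lt with h | h
    · exact h.symm
    exfalso
    have hev : ∀ᶠ x in Filter.atBot, L / 2 < |w x| ^ a :=
      hlim.eventually_const_lt (by linarith)
    obtain ⟨T, hT⟩ := Filter.eventually_atBot.mp hev
    set ε : ℝ := (L / 2) ^ (2 / a) with hε
    have hεpos : 0 < ε := Real.rpow_pos_of_pos (by linarith) _
    have hsub : Set.Iic T ⊆ {x : ℝ | ε ≤ ‖(w x) ^ 2‖} := by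
      intro x hx
      have h1 : L / 2 < |w x| ^ a := hT x hx
      have h2 : (L / 2) ^ (2 / a) ≤ (|w x| ^ a) ^ (2 / a) :=
        Real.rpow_le_rpow (by linarith) h1.le (by positivity)
      have h2' : ε ≤ |w x| ^ (a * (2 / a)) := by
        rw [Real.rpow_mul (abs_nonneg _)]; exact h2
      rw [show a * (2 / a) = (2:ℝ) by field_simp] at h2'
      simp only [Set.mem_setOf_eq]
      rw [norm_pow, Real.norm_eq_abs, ← Real.rpow_natCast (|w x|) 2]
      exact_mod_cast h2'
    have hfin := hw2.measure_norm_ge_lt_top hεpos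
    have hle : (volume (Set.Iic T)) ≤ volume {x : ℝ | ε ≤ ‖(w x) ^ 2‖} :=
      measure_mono hsub
    rw [Real.volume_Iic] at hle
    exact absurd (lt_of_le_of_lt hle hfin) (by simp)
  have heq : |w y| ^ a = ∫ t in Set.Iic y, D t := by
    rw [hL] at hL0; linarith
  rw [heq]
  calc (∫ t in Set.Iic y, D t) ≤ ∫ t in Set.Iic y, a * (|w t| ^ (a-1) * |deriv w t|) := by
        refine integral_mono_ae hDint.integrableOn ((hint.const_mul a).integrableOn)
          (Filter.Eventually.of_forall fun x => (le_abs_self _).trans (hDbound x))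
    _ ≤ ∫ t, a * (|w t| ^ (a-1) * |deriv w t|) :=
        integral_mono_measure Measure.restrict_le_self
          (Filter.Eventually.of_forall fun x => by positivity) (hint.const_mul a)
    _ = a * ∫ x, |w x| ^ (a - 1) * |deriv w x| := integral_const_mul a _


/-- integrability of `|w|^t * g` for bounded `w` and integrable nonneg `g`. -/
lemma int_pow_mul {w g : ℝ → ℝ} (hmeas : Measurable w) {M : ℝ}
    (hM : ∀ x, |w x| ≤ M) (hg : Integrable g volume) (hgnn : ∀ x, 0 ≤ g x)
    {t : ℝ} (ht : 0 ≤ t) :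
    Integrable (fun x => |w x| ^ t * g x) volume := by
  have hM0 : 0 ≤ M := le_trans (abs_nonneg _) (hM 0)
  refine Integrable.mono' (hg.const_mul (M ^ t))
    (((hmeas.abs.pow measurable_const).aemeasurable.mul
      hg.aemeasurable).aestronglyMeasurable)
    (Filter.Eventually.of_forall fun x => ?_)
  rw [Real.norm_eq_abs, abs_of_nonneg (mul_nonneg (Real.rpow_nonneg (abs_nonneg _) _) (hgnn x))]
  exact mul_le_mul_of_nonneg_right (Real.rpow_le_rpow (abs_nonneg _) (hM x) ht) (hgnn x)

set_option maxHeartbeats 1000000 in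
/-- Proposition 3 of the paper: for `1 < m ≤ 4/3`, `p ≥ 2`, there is `C > 0`
such that for every `w ∈ H¹(ℝ)` with `w' ∈ L^{m+1}`,
`∫ |w|^(p-1) (w')² ≤ C ‖w‖_{(2-m)/(m-1)}^{2-m} ∫ |w|^(p-2)|w'|^(m+1)`;
note `‖w‖_{(2-m)/(m-1)}^{2-m} = (∫ |w|^{(2-m)/(m-1)})^{m-1}`. -/
theorem stmt_6 (m p : ℝ) (hm1 : 1 < m) (hm2 : m ≤ 4 / 3) (hp : 2 ≤ p) :
    ∃ C : ℝ, 0 < C ∧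
      ∀ w : ℝ → ℝ, Differentiable ℝ w →
        MemLp w 2 (volume : Measure ℝ) →
        MemLp (deriv w) 2 (volume : Measure ℝ) →
        MemLp (deriv w) (ENNReal.ofReal (m + 1)) (volume : Measure ℝ) →
        (∫ x : ℝ, |w x| ^ (p - 1) * (deriv w x) ^ 2) ≤
          C * (∫ x : ℝ, |w x| ^ ((2 - m) / (m - 1))) ^ (m - 1) *
            (∫ x : ℝ, |w x| ^ (p - 2) * |deriv w x| ^ (m + 1)) := by
  have hm1' : (0:ℝ) < m - 1 := by linarith
  have hmp1 : (0:ℝ) < m + 1 := by linarith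
  have h2m : (0:ℝ) < 2 - m := by linarith
  set q : ℝ := (2 - m) / (m - 1) with hqdef
  have hq2 : 2 ≤ q := by rw [hqdef, le_div_iff₀ hm1']; nlinarith
  set a : ℝ := 1 + (p - 2) / (m + 1) + m * (2 - m) / ((m - 1) * (m + 1)) with hadef
  have hγpos : 0 < m * (2 - m) / ((m - 1) * (m + 1)) :=
    div_pos (mul_pos (by linarith) h2m) (mul_pos hm1' hmp1)
  have ha : 1 < a := by
    have h1 : 0 ≤ (p - 2) / (m + 1) := div_nonneg (by linarith) hmp1.le
    rw [hadef]; linarith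
  have ha0 : 0 < a := by linarith
  refine ⟨a ^ (m - 1), Real.rpow_pos_of_pos ha0 _, ?_⟩
  intro w hdiff hw2 hd2 hdm
  set d : ℝ → ℝ := deriv w with hddef
  have mw : Measurable w := hdiff.continuous.measurable
  have md : Measurable d := measurable_deriv w
  -- basic integrability
  have hw2' : Integrable (fun x => (w x) ^ 2) volume := by
    have h := hw2.integrable_norm_rpow (by norm_num) (by norm_num)
    refine h.congr (Filter.Eventually.of_forall fun x => ?_)
    show ‖w x‖ ^ ((2:ℝ≥0∞)).toReal = (w x) ^ 2
    rw [show ((2:ℝ≥0∞)).toReal = ((2:ℕ):ℝ) by simp, Real.rpow_natCast, Real.norm_eq_abs, sq_abs]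
  have hd2' : Integrable (fun x => (d x) ^ 2) volume := by
    have h := hd2.integrable_norm_rpow (by norm_num) (by norm_num)
    refine h.congr (Filter.Eventually.of_forall fun x => ?_)
    show ‖d x‖ ^ ((2:ℝ≥0∞)).toReal = (d x) ^ 2
    rw [show ((2:ℝ≥0∞)).toReal = ((2:ℕ):ℝ) by simp, Real.rpow_natCast, Real.norm_eq_abs, sq_abs]
  have hdm' : Integrable (fun x => |d x| ^ (m + 1)) volume := by
    have h := hdm.integrable_norm_rpow (by simp [hmp1, hmp1.not_ge]) ENNReal.ofReal_ne_top
    refine h.congr (Filter.Eventually.of_forall fun x => ?_)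
    show ‖d x‖ ^ (ENNReal.ofReal (m+1)).toReal = |d x| ^ (m + 1)
    rw [ENNReal.toReal_ofReal hmp1.le, Real.norm_eq_abs]
  -- boundedness of w
  have hw2mem : MemLp w (ENNReal.ofReal 2) volume := by
    rwa [show ENNReal.ofReal 2 = 2 by norm_num]
  have hd2mem : MemLp d (ENNReal.ofReal 2) volume := by
    rwa [show ENNReal.ofReal 2 = 2 by norm_num]
  have hconj22 : (2:ℝ).HolderConjugate 2 := Real.holderConjugate_iff.mpr ⟨by norm_num, by norm_num⟩
  have hint2 : Integrable (fun x => |w x| ^ ((2:ℝ) - 1) * |d x|) volume := by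
    have h := integrable_mul_conj hconj22 hw2mem.abs hd2mem.abs
    refine h.congr (Filter.Eventually.of_forall fun x => ?_)
    norm_num
  have hsup2 := sup_bound hdiff hw2' (by norm_num : (1:ℝ) < 2) hint2
  set M : ℝ := (2 * ∫ x, |w x| ^ ((2:ℝ) - 1) * |d x|) ^ ((2:ℝ))⁻¹ with hMdef
  have hM : ∀ x, |w x| ≤ M := by
    intro x
    have h1 := hsup2 x
    have h2 : (|w x| ^ (2:ℝ)) ^ ((2:ℝ))⁻¹ ≤ M := by
      rw [hMdef]
      exact Real.rpow_le_rpow (Real.rpow_nonneg (abs_nonneg _) _) h1 (by norm_num)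
    rwa [← Real.rpow_mul (abs_nonneg _), mul_inv_cancel₀ (by norm_num : (2:ℝ) ≠ 0),
      Real.rpow_one] at h2
  -- exponents
  set α : ℝ := 2 * (p - 2) / (m + 1) with hα
  set τ : ℝ := p - 1 - α with hτ
  set β : ℝ := (p - 2) / (m + 1) with hβ
  set γ : ℝ := m * (2 - m) / ((m - 1) * (m + 1)) with hγ
  set r : ℝ := p - 2 + (m + 1) / (m - 1) with hr
  have hα0 : 0 ≤ α := by rw [hα]; exact div_nonneg (by linarith) (by linarith)
  have hτ1 : 1 ≤ τ := by
    have h1 : 2 * (p - 2) / (m + 1) ≤ p - 2 := by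
      rw [div_le_iff₀ hmp1]; nlinarith
    rw [hτ]; linarith
  have hβγ : β + γ = a - 1 := by rw [hβ, hγ, hadef]; ring
  have hq0 : (0:ℝ) < q := by linarith
  have hr2 : 2 ≤ r := by
    have h1 : q ≤ (m + 1) / (m - 1) := by
      rw [hqdef, div_le_div_iff₀ hm1' hm1']; nlinarith
    rw [hr]; linarith
  have he1 : α * ((m + 1) / 2) = p - 2 := by rw [hα]; field_simp
  have he4 : τ * ((m + 1) / (m - 1)) = r := by
    rw [hτ, hα, hr]; field_simp; ring
  have he5 : β * (m + 1) = p - 2 := by rw [hβ]; field_simp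
  have he6 : γ * ((m + 1) / m) = q := by
    rw [hγ, hqdef]; rw [div_mul_div_comm]; rw [div_eq_div_iff (by positivity) (by positivity)]
    ring
  have hm1ne : m - 1 ≠ 0 := hm1'.ne'
  have hmp1ne : m + 1 ≠ 0 := hmp1.ne'
  have he9 : r = a * (m + 1) + q := by
    rw [hr, hadef, hβ, hγ, hqdef]; field_simp; ring
  -- pointwise helpers
  have hd2abs : ∀ x : ℝ, (d x) ^ 2 = |d x| ^ (2:ℝ) := fun x => by
    rw [← sq_abs, ← Real.rpow_natCast (|d x|) 2]; norm_num
  have hw2abs : ∀ x : ℝ, (w x) ^ 2 = |w x| ^ (2:ℝ) := fun x => by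
    rw [← sq_abs, ← Real.rpow_natCast (|w x|) 2]; norm_num
  have hprod_rpow : ∀ (x : ℝ) (u v c : ℝ), (|w x| ^ u * |d x| ^ v) ^ c
      = |w x| ^ (u * c) * |d x| ^ (v * c) := fun x u v c => by
    rw [Real.mul_rpow (Real.rpow_nonneg (abs_nonneg _) _) (Real.rpow_nonneg (abs_nonneg _) _),
      ← Real.rpow_mul (abs_nonneg _), ← Real.rpow_mul (abs_nonneg _)]
  -- integrability
  have hIB : Integrable (fun x => |w x| ^ (p - 2) * |d x| ^ (m + 1)) volume :=
    int_pow_mul mw hM hdm' (fun x => Real.rpow_nonneg (abs_nonneg _) _) (by linarith)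
  have hII : Integrable (fun x => |w x| ^ (p - 1) * (d x) ^ 2) volume :=
    int_pow_mul mw hM hd2' (fun x => sq_nonneg _) (by linarith)
  have hIA : Integrable (fun x => |w x| ^ q) volume := by
    have h := int_pow_mul mw hM hw2' (fun x => sq_nonneg _) (t := q - 2) (by linarith)
    refine h.congr (Filter.Eventually.of_forall fun x => ?_)
    show |w x| ^ (q - 2) * (w x) ^ 2 = |w x| ^ q
    rw [hw2abs x, ← Real.rpow_add' (abs_nonneg _) (by norm_num; linarith)]
    norm_num
  have hIR : Integrable (fun x => |w x| ^ r) volume := by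
    have h := int_pow_mul mw hM hw2' (fun x => sq_nonneg _) (t := r - 2) (by linarith)
    refine h.congr (Filter.Eventually.of_forall fun x => ?_)
    show |w x| ^ (r - 2) * (w x) ^ 2 = |w x| ^ r
    rw [hw2abs x, ← Real.rpow_add' (abs_nonneg _) (by norm_num; linarith)]
    norm_num
  -- the functions for Hölder
  set f₁ : ℝ → ℝ := fun x => |w x| ^ α * (d x) ^ 2 with hf₁
  set g₁ : ℝ → ℝ := fun x => |w x| ^ τ with hg₁
  set f₂ : ℝ → ℝ := fun x => |w x| ^ β * |d x| with hf₂
  set g₂ : ℝ → ℝ := fun x => |w x| ^ γ with hg₂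
  have hf₁meas : AEStronglyMeasurable f₁ volume :=
    ((mw.abs.pow measurable_const).mul (md.pow_const 2)).aestronglyMeasurable
  have hg₁meas : AEStronglyMeasurable g₁ volume :=
    (mw.abs.pow measurable_const).aestronglyMeasurable
  have hf₂meas : AEStronglyMeasurable f₂ volume :=
    ((mw.abs.pow measurable_const).mul md.abs).aestronglyMeasurable
  have hg₂meas : AEStronglyMeasurable g₂ volume :=
    (mw.abs.pow measurable_const).aestronglyMeasurable
  have hMf₁ : MemLp f₁ (ENNReal.ofReal ((m + 1) / 2)) volume := by
    refine memLp_of_integrable_rpow (by positivity) hf₁meas ?_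
    refine hIB.congr (Filter.Eventually.of_forall fun x => ?_)
    show |w x| ^ (p - 2) * |d x| ^ (m + 1) = |(|w x| ^ α * (d x) ^ 2)| ^ ((m + 1) / 2)
    rw [abs_of_nonneg (mul_nonneg (Real.rpow_nonneg (abs_nonneg _) _) (sq_nonneg _)),
      hd2abs x, hprod_rpow, he1, show (2:ℝ) * ((m + 1) / 2) = m + 1 by ring]
  have hMg₁ : MemLp g₁ (ENNReal.ofReal ((m + 1) / (m - 1))) volume := by
    refine memLp_of_integrable_rpow (by positivity) hg₁meas ?_
    refine hIR.congr (Filter.Eventually.of_forall fun x => ?_)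
    show |w x| ^ r = |(|w x| ^ τ)| ^ ((m + 1) / (m - 1))
    rw [abs_of_nonneg (Real.rpow_nonneg (abs_nonneg _) _), ← Real.rpow_mul (abs_nonneg _), he4]
  have hMf₂ : MemLp f₂ (ENNReal.ofReal (m + 1)) volume := by
    refine memLp_of_integrable_rpow (by positivity) hf₂meas ?_
    refine hIB.congr (Filter.Eventually.of_forall fun x => ?_)
    show |w x| ^ (p - 2) * |d x| ^ (m + 1) = |(|w x| ^ β * |d x|)| ^ (m + 1)
    rw [abs_of_nonneg (mul_nonneg (Real.rpow_nonneg (abs_nonneg _) _) (abs_nonneg _)),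
      show |w x| ^ β * |d x| = |w x| ^ β * |d x| ^ (1:ℝ) by rw [Real.rpow_one],
      hprod_rpow, he5, one_mul]
  have hMg₂ : MemLp g₂ (ENNReal.ofReal ((m + 1) / m)) volume := by
    refine memLp_of_integrable_rpow (by positivity) hg₂meas ?_
    refine hIA.congr (Filter.Eventually.of_forall fun x => ?_)
    show |w x| ^ q = |(|w x| ^ γ)| ^ ((m + 1) / m)
    rw [abs_of_nonneg (Real.rpow_nonneg (abs_nonneg _) _), ← Real.rpow_mul (abs_nonneg _), he6]
  -- conjugate exponents
  have hconj1 : ((m + 1) / 2).HolderConjugate ((m + 1) / (m - 1)) := by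
    rw [Real.holderConjugate_iff]; constructor
    · rw [lt_div_iff₀ (by norm_num : (0:ℝ) < 2)]; linarith
    · rw [inv_div, inv_div, ← add_div, div_eq_one_iff_eq (by linarith)]; ring
  have hconj2 : (m + 1).HolderConjugate ((m + 1) / m) := by
    rw [Real.holderConjugate_iff]; constructor
    · linarith
    · rw [inv_div, ← one_div, ← add_div, div_eq_one_iff_eq (by linarith)]; ring
  -- abbreviations for the integrals
  set A : ℝ := ∫ x, |w x| ^ q with hA
  set B : ℝ := ∫ x, |w x| ^ (p - 2) * |d x| ^ (m + 1) with hB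
  set R : ℝ := ∫ x, |w x| ^ r with hR
  have hAnn : 0 ≤ A := integral_nonneg fun x => by positivity
  have hBnn : 0 ≤ B := integral_nonneg fun x => by positivity
  have hRnn : 0 ≤ R := integral_nonneg fun x => by positivity
  -- Hölder 2 and the sup bound
  have hJint : Integrable (fun x => |w x| ^ (a - 1) * |d x|) volume := by
    refine (integrable_mul_conj hconj2 hMf₂ hMg₂).congr
      (Filter.Eventually.of_forall fun x => ?_)
    show |w x| ^ β * |d x| * |w x| ^ γ = |w x| ^ (a - 1) * |d x|
    rw [mul_right_comm, ← Real.rpow_add' (abs_nonneg _) (by rw [hβγ]; exact sub_ne_zero.mpr (ne_of_gt ha)), hβγ]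
  set J : ℝ := ∫ x, |w x| ^ (a - 1) * |d x| with hJ
  have hJnn : 0 ≤ J := integral_nonneg fun x => by positivity
  have hH2 : J ≤ B ^ (1 / (m + 1)) * A ^ (m / (m + 1)) := by
    have h := integral_mul_le_Lp_mul_Lq_of_nonneg hconj2
      (Filter.Eventually.of_forall fun x => by positivity)
      (Filter.Eventually.of_forall fun x => by positivity) hMf₂ hMg₂
    have e_fg : ∫ x, f₂ x * g₂ x = J := by
      refine integral_congr_ae (Filter.Eventually.of_forall fun x => ?_)
      show |w x| ^ β * |d x| * |w x| ^ γ = |w x| ^ (a - 1) * |d x|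
      rw [mul_right_comm, ← Real.rpow_add' (abs_nonneg _) (by rw [hβγ]; exact sub_ne_zero.mpr (ne_of_gt ha)), hβγ]
    have e_f : ∫ x, f₂ x ^ (m + 1) = B := by
      refine integral_congr_ae (Filter.Eventually.of_forall fun x => ?_)
      show (|w x| ^ β * |d x|) ^ (m + 1) = |w x| ^ (p - 2) * |d x| ^ (m + 1)
      rw [show |w x| ^ β * |d x| = |w x| ^ β * |d x| ^ (1:ℝ) by rw [Real.rpow_one],
        hprod_rpow, he5, one_mul]
    have e_g : ∫ x, g₂ x ^ ((m + 1) / m) = A := by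
      refine integral_congr_ae (Filter.Eventually.of_forall fun x => ?_)
      show (|w x| ^ γ) ^ ((m + 1) / m) = |w x| ^ q
      rw [← Real.rpow_mul (abs_nonneg _), he6]
    rw [e_fg, e_f, e_g, one_div_div] at h
    exact h
  have hsup := sup_bound hdiff hw2' ha hJint
  -- Step 2 : R ≤ (a*J)^(m+1) * A
  have hstep2 : R ≤ (a * J) ^ (m + 1) * A := by
    have hpt : ∀ x : ℝ, |w x| ^ r ≤ (a * J) ^ (m + 1) * |w x| ^ q := by
      intro x
      have h1 : |w x| ^ r = |w x| ^ (a * (m + 1)) * |w x| ^ q := by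
        rw [← Real.rpow_add' (abs_nonneg _) (by rw [← he9]; linarith), ← he9]
      have h2 : |w x| ^ (a * (m + 1)) ≤ (a * J) ^ (m + 1) := by
        rw [Real.rpow_mul (abs_nonneg _)]
        exact Real.rpow_le_rpow (Real.rpow_nonneg (abs_nonneg _) _) (hsup x) (by linarith)
      rw [h1]
      exact mul_le_mul_of_nonneg_right h2 (Real.rpow_nonneg (abs_nonneg _) _)
    calc R ≤ ∫ x, (a * J) ^ (m + 1) * |w x| ^ q :=
          integral_mono hIR (hIA.const_mul _) hpt
      _ = (a * J) ^ (m + 1) * A := integral_const_mul _ _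
  -- Step 3 : (a*J)^(m+1) ≤ a^(m+1) * (B * A^m)
  have hstep3 : (a * J) ^ (m + 1) ≤ a ^ (m + 1) * (B * A ^ m) := by
    have h1 : (a * J) ^ (m + 1) = a ^ (m + 1) * J ^ (m + 1) :=
      Real.mul_rpow ha0.le hJnn
    have h2 : J ^ (m + 1) ≤ (B ^ (1 / (m + 1)) * A ^ (m / (m + 1))) ^ (m + 1) :=
      Real.rpow_le_rpow hJnn hH2 (by linarith)
    have h3 : (B ^ (1 / (m + 1)) * A ^ (m / (m + 1))) ^ (m + 1) = B * A ^ m := by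
      rw [Real.mul_rpow (Real.rpow_nonneg hBnn _) (Real.rpow_nonneg hAnn _),
        ← Real.rpow_mul hBnn, ← Real.rpow_mul hAnn,
        show 1 / (m + 1) * (m + 1) = (1:ℝ) by field_simp,
        show m / (m + 1) * (m + 1) = m by field_simp, Real.rpow_one]
    rw [h1, ← h3]
    exact mul_le_mul_of_nonneg_left h2 (Real.rpow_nonneg ha0.le _)
  have hRle : R ≤ a ^ (m + 1) * B * A ^ (m + 1) := by
    have h1 : R ≤ a ^ (m + 1) * (B * A ^ m) * A :=
      le_trans hstep2 (mul_le_mul_of_nonneg_right hstep3 hAnn)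
    have h2 : A ^ m * A = A ^ (m + 1) := by
      nth_rewrite 2 [← Real.rpow_one A]
      rw [← Real.rpow_add' hAnn (by linarith)]
    calc R ≤ a ^ (m + 1) * (B * A ^ m) * A := h1
      _ = a ^ (m + 1) * B * (A ^ m * A) := by ring
      _ = a ^ (m + 1) * B * A ^ (m + 1) := by rw [h2]
  -- Hölder 1
  have hH1 : (∫ x, |w x| ^ (p - 1) * (d x) ^ 2)
      ≤ B ^ (2 / (m + 1)) * R ^ ((m - 1) / (m + 1)) := by
    have h := integral_mul_le_Lp_mul_Lq_of_nonneg hconj1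
      (Filter.Eventually.of_forall fun x => by positivity)
      (Filter.Eventually.of_forall fun x => by positivity) hMf₁ hMg₁
    have e_fg : ∫ x, f₁ x * g₁ x = ∫ x, |w x| ^ (p - 1) * (d x) ^ 2 := by
      refine integral_congr_ae (Filter.Eventually.of_forall fun x => ?_)
      show |w x| ^ α * (d x) ^ 2 * |w x| ^ τ = |w x| ^ (p - 1) * (d x) ^ 2
      rw [mul_right_comm, ← Real.rpow_add' (abs_nonneg _)
        (by rw [show α + τ = p - 1 by rw [hτ]; ring]; linarith),
        show α + τ = p - 1 by rw [hτ]; ring]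
    have e_f : ∫ x, f₁ x ^ ((m + 1) / 2) = B := by
      refine integral_congr_ae (Filter.Eventually.of_forall fun x => ?_)
      show (|w x| ^ α * (d x) ^ 2) ^ ((m + 1) / 2) = |w x| ^ (p - 2) * |d x| ^ (m + 1)
      rw [hd2abs x, hprod_rpow, he1, show (2:ℝ) * ((m + 1) / 2) = m + 1 by ring]
    have e_g : ∫ x, g₁ x ^ ((m + 1) / (m - 1)) = R := by
      refine integral_congr_ae (Filter.Eventually.of_forall fun x => ?_)
      show (|w x| ^ τ) ^ ((m + 1) / (m - 1)) = |w x| ^ r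
      rw [← Real.rpow_mul (abs_nonneg _), he4]
    rw [e_fg, e_f, e_g, one_div_div, one_div_div] at h
    exact h
  -- combine
  have hfin : R ^ ((m - 1) / (m + 1))
      ≤ a ^ (m - 1) * B ^ ((m - 1) / (m + 1)) * A ^ (m - 1) := by
    have h1 : R ^ ((m - 1) / (m + 1)) ≤ (a ^ (m + 1) * B * A ^ (m + 1)) ^ ((m - 1) / (m + 1)) :=
      Real.rpow_le_rpow hRnn hRle (by positivity)
    have h2 : (a ^ (m + 1) * B * A ^ (m + 1)) ^ ((m - 1) / (m + 1))
        = a ^ (m - 1) * B ^ ((m - 1) / (m + 1)) * A ^ (m - 1) := by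
      rw [Real.mul_rpow (mul_nonneg (Real.rpow_nonneg ha0.le _) hBnn) (Real.rpow_nonneg hAnn _),
        Real.mul_rpow (Real.rpow_nonneg ha0.le _) hBnn,
        ← Real.rpow_mul ha0.le, ← Real.rpow_mul hAnn,
        show (m + 1) * ((m - 1) / (m + 1)) = m - 1 by field_simp]
    rw [← h2]; exact h1
  have hBmerge : B ^ (2 / (m + 1)) * B ^ ((m - 1) / (m + 1)) = B := by
    have hsum1 : 2 / (m + 1) + (m - 1) / (m + 1) = (1:ℝ) := by
      rw [← add_div, div_eq_one_iff_eq (by linarith)]; ring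
    rw [← Real.rpow_add' hBnn (by rw [hsum1]; norm_num), hsum1, Real.rpow_one]
  calc (∫ x : ℝ, |w x| ^ (p - 1) * (deriv w x) ^ 2)
      ≤ B ^ (2 / (m + 1)) * R ^ ((m - 1) / (m + 1)) := hH1
    _ ≤ B ^ (2 / (m + 1)) * (a ^ (m - 1) * B ^ ((m - 1) / (m + 1)) * A ^ (m - 1)) :=
        mul_le_mul_of_nonneg_left hfin (Real.rpow_nonneg hBnn _)
    _ = a ^ (m - 1) * A ^ (m - 1) * (B ^ (2 / (m + 1)) * B ^ ((m - 1) / (m + 1))) := by ring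
    _ = a ^ (m - 1) * A ^ (m - 1) * B := by rw [hBmerge]
end

section
/- Let 1 < m < 2 and p > 2, and set ν = (m+p-1)/(mp+m+p-1) ∈ (0,1). There exists a constant C > 0 such that for all w ∈ H¹(ℝ) ∩ W^{1,∞}(ℝ), ‖w‖_{L^∞}^{(m+p-1)/(m+1)} ≤ C · (∫_ℝ |w|^{p-2}|w'|^{m+1} dx)^{ν/(m+1)} · ‖w‖_{L^p}^{(m+p-1)(1-ν)/(m+1)}. -/
open MeasureTheory

lemma abs_rpow_hasDerivAt {s : ℝ} (hs : 1 < s) (t : ℝ) :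
    HasDerivAt (fun u : ℝ => |u| ^ s) ((s * |t| ^ (s - 1)) * Real.sign t) t := by
  rcases lt_trichotomy t 0 with ht | rfl | ht
  · have h1 : HasDerivAt (fun x : ℝ => x ^ s) (s * |t| ^ (s - 1)) |t| :=
      Real.hasDerivAt_rpow_const (Or.inl (abs_ne_zero.2 ht.ne))
    have h2 : HasDerivAt (fun u : ℝ => |u|) (-1) t := hasDerivAt_abs_neg ht
    have h3 := h1.comp t h2
    simp only [Function.comp_def] at h3
    simpa [Real.sign_of_neg ht] using h3
  · rw [Real.sign_zero, mul_zero]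
    rw [hasDerivAt_iff_tendsto_slope]
    have hb : ∀ u : ℝ, |slope (fun u : ℝ => |u| ^ s) 0 u| ≤ |u| ^ (s - 1) := by
      intro u
      rcases eq_or_ne u 0 with rfl | hu
      · simp only [slope_same, abs_zero]
        positivity
      · rw [slope_def_field]
        have h0 : (0:ℝ) < |u| := abs_pos.2 hu
        have he : ((|u| : ℝ) ^ s - |0| ^ s) / (u - 0) = |u| ^ s / u := by
          simp [Real.zero_rpow (by positivity : s ≠ 0)]
        rw [he, abs_div, abs_of_nonneg (Real.rpow_nonneg (abs_nonneg u) s),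
          Real.rpow_sub h0, Real.rpow_one]
    have htend : Filter.Tendsto (fun u : ℝ => |u| ^ (s - 1)) (nhdsWithin 0 {(0:ℝ)}ᶜ)
        (nhds 0) := by
      have hc2 : ContinuousAt (fun u : ℝ => |u| ^ (s - 1)) 0 :=
        (Real.continuousAt_rpow_const |(0:ℝ)| (s - 1) (Or.inr (by linarith))).comp
          (continuous_abs.continuousAt)
      have := hc2.tendsto
      rw [show |(0:ℝ)| ^ (s - 1) = 0 by
        simp [Real.zero_rpow (by intro h; linarith [h] : s - 1 ≠ 0)]] at this
      exact this.mono_left nhdsWithin_le_nhds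
    exact (tendsto_zero_iff_abs_tendsto_zero _).2
      (squeeze_zero (fun u => abs_nonneg _) hb htend)
  · have h1 : HasDerivAt (fun x : ℝ => x ^ s) (s * |t| ^ (s - 1)) |t| :=
      Real.hasDerivAt_rpow_const (Or.inl (abs_ne_zero.2 ht.ne'))
    have h2 : HasDerivAt (fun u : ℝ => |u|) 1 t := hasDerivAt_abs_pos ht
    have h3 := h1.comp t h2
    simp only [Function.comp_def] at h3
    simpa [Real.sign_of_pos ht] using h3

lemma abs_real_sign_le_one (t : ℝ) : |Real.sign t| ≤ 1 := by
  rcases lt_trichotomy t 0 with ht | rfl | ht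
  · rw [Real.sign_of_neg ht]; norm_num
  · rw [Real.sign_zero]; norm_num
  · rw [Real.sign_of_pos ht]; norm_num

lemma measurable_abs_rpow (w : ℝ → ℝ) (hw : Measurable w) {c : ℝ} (hc : 0 ≤ c) :
    Measurable (fun x => |w x| ^ c) := by
  have h : Continuous (fun y : ℝ => y ^ c) :=
    continuous_iff_continuousAt.2 fun x => Real.continuousAt_rpow_const x c (Or.inr hc)
  exact h.measurable.comp hw.abs

/-- Interpolation step in Proposition 4: with `ν = (m+p-1)/(mp+m+p-1)`,
`‖w‖_∞^{(m+p-1)/(m+1)} ≤ C (∫ |w|^{p-2}|w'|^{m+1})^{ν/(m+1)} ‖w‖_p^{(m+p-1)(1-ν)/(m+1)}`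
for all `w ∈ H¹(ℝ) ∩ W^{1,∞}(ℝ)`. -/
theorem stmt_7 (m p : ℝ) (hm1 : 1 < m) (hm2 : m < 2) (hp : 2 < p) :
    ∃ C : ℝ, 0 < C ∧
      ∀ w : ℝ → ℝ, Differentiable ℝ w →
        MemLp w 2 (volume : Measure ℝ) →
        MemLp (deriv w) 2 (volume : Measure ℝ) →
        (∃ K : ℝ, ∀ x : ℝ, |w x| ≤ K ∧ |deriv w x| ≤ K) →
        (⨆ x : ℝ, |w x|) ^ ((m + p - 1) / (m + 1)) ≤
          C * (∫ x : ℝ, |w x| ^ (p - 2) * |deriv w x| ^ (m + 1)) ^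
              ((m + p - 1) / (m * p + m + p - 1) / (m + 1)) *
            ((∫ x : ℝ, |w x| ^ p) ^ (1 / p)) ^
              ((m + p - 1) * (1 - (m + p - 1) / (m * p + m + p - 1)) / (m + 1)) := by
  have hm0 : (0:ℝ) < m + 1 := by linarith
  have hD0 : (0:ℝ) < m * p + m + p - 1 := by nlinarith
  set ν : ℝ := (m + p - 1) / (m * p + m + p - 1) with hνdef
  set s : ℝ := (m * p + m + p - 1) / (m + 1) with hsdef
  have hs1 : 1 < s := by
    rw [hsdef, lt_div_iff₀ hm0]; nlinarith
  have hs0 : (0:ℝ) < s := by linarith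
  have hν0 : (0:ℝ) < ν := div_pos (by linarith) hD0
  have hsν : s * ν = (m + p - 1) / (m + 1) := by
    rw [hsdef, hνdef]; field_simp [show m * (p + 1) + p - 1 ≠ 0 by linarith]
  refine ⟨s ^ ν, Real.rpow_pos_of_pos hs0 ν, ?_⟩
  rintro w hw hw2 hw'2 ⟨K, hK⟩
  have hwm : Measurable w := hw.continuous.measurable
  have hw'm : Measurable (deriv w) := measurable_deriv w
  have hK0 : (0:ℝ) ≤ K := (abs_nonneg _).trans (hK 0).1
  -- The three integrands
  set F : ℝ → ℝ := fun x => |w x| ^ (p - 2) * |deriv w x| ^ (m + 1) with hFdef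
  set G : ℝ → ℝ := fun x => |w x| ^ p with hGdef
  set g : ℝ → ℝ := fun x => |w x| ^ (s - 1) * |deriv w x| with hgdef
  have hFmeas : Measurable F :=
    (measurable_abs_rpow w hwm (by linarith)).mul
      (measurable_abs_rpow (deriv w) hw'm (by linarith))
  have hGmeas : Measurable G := measurable_abs_rpow w hwm (by linarith)
  have hgmeas : Measurable g :=
    (measurable_abs_rpow w hwm (by linarith)).mul hw'm.abs
  have hFnn : ∀ x, 0 ≤ F x := fun x => by positivity
  have hGnn : ∀ x, 0 ≤ G x := fun x => by positivity
  have hgnn : ∀ x, 0 ≤ g x := fun x => by positivity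
  -- squares, as rpow
  have habs_sq : ∀ y : ℝ, |y| ^ (2:ℝ) = y ^ 2 := by
    intro y
    rw [show (2:ℝ) = ((2:ℕ):ℝ) by norm_num, Real.rpow_natCast, sq_abs]
  -- Integrability of F
  have hF_int : Integrable F volume := by
    refine Integrable.mono' ((hw'2.integrable_sq).const_mul (K ^ (p - 2) * K ^ (m - 1)))
      hFmeas.aestronglyMeasurable (Filter.Eventually.of_forall fun x => ?_)
    rw [Real.norm_eq_abs, abs_of_nonneg (hFnn x)]
    have h1 : |w x| ^ (p - 2) ≤ K ^ (p - 2) :=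
      Real.rpow_le_rpow (abs_nonneg _) (hK x).1 (by linarith)
    have h2 : |deriv w x| ^ (m + 1) = |deriv w x| ^ (m - 1) * deriv w x ^ 2 := by
      rw [← habs_sq, ← Real.rpow_add' (abs_nonneg _) (by intro h; linarith : m - 1 + 2 ≠ 0)]
      congr 1
      ring
    have h3 : |deriv w x| ^ (m - 1) ≤ K ^ (m - 1) :=
      Real.rpow_le_rpow (abs_nonneg _) (hK x).2 (by linarith)
    have h4 := mul_le_mul h1 (mul_le_mul_of_nonneg_right h3 (sq_nonneg (deriv w x)))
      (by positivity) (by positivity)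
    rw [hFdef]
    simp only []
    rw [h2]
    calc |w x| ^ (p - 2) * (|deriv w x| ^ (m - 1) * deriv w x ^ 2)
        ≤ K ^ (p - 2) * (K ^ (m - 1) * deriv w x ^ 2) := h4
      _ = K ^ (p - 2) * K ^ (m - 1) * deriv w x ^ 2 := by ring
  -- Integrability of G
  have hG_int : Integrable G volume := by
    refine Integrable.mono' ((hw2.integrable_sq).const_mul (K ^ (p - 2)))
      hGmeas.aestronglyMeasurable (Filter.Eventually.of_forall fun x => ?_)
    rw [Real.norm_eq_abs, abs_of_nonneg (hGnn x)]
    have h2 : |w x| ^ p = |w x| ^ (p - 2) * w x ^ 2 := by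
      rw [← habs_sq, ← Real.rpow_add' (abs_nonneg _) (by intro h; linarith : p - 2 + 2 ≠ 0)]
      norm_num
    have h1 : |w x| ^ (p - 2) ≤ K ^ (p - 2) :=
      Real.rpow_le_rpow (abs_nonneg _) (hK x).1 (by linarith)
    rw [hGdef]
    simp only []
    rw [h2]
    exact mul_le_mul_of_nonneg_right h1 (sq_nonneg _)
  -- Hölder factors
  set u : ℝ → ℝ := fun x => |w x| ^ ((p - 2) / (m + 1)) * |deriv w x| with hudef
  set v : ℝ → ℝ := fun x => |w x| ^ (m * p / (m + 1)) with hvdef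
  have humeas : Measurable u :=
    (measurable_abs_rpow w hwm (div_nonneg (by linarith) hm0.le)).mul hw'm.abs
  have hvmeas : Measurable v :=
    measurable_abs_rpow w hwm (div_nonneg (by nlinarith) hm0.le)
  have hunn : ∀ x, 0 ≤ u x := fun x => by positivity
  have hvnn : ∀ x, 0 ≤ v x := fun x => by positivity
  have hu_pow : ∀ x, u x ^ (m + 1) = F x := by
    intro x
    rw [hudef, hFdef]
    simp only []
    rw [Real.mul_rpow (by positivity) (abs_nonneg _), ← Real.rpow_mul (abs_nonneg _),
      div_mul_cancel₀ _ hm0.ne']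
  have hv_pow : ∀ x, v x ^ ((m + 1) / m) = G x := by
    intro x
    rw [hvdef, hGdef]
    simp only []
    rw [← Real.rpow_mul (abs_nonneg _)]
    congr 1
    field_simp
  have huv : ∀ x, u x * v x = g x := by
    intro x
    rw [hudef, hvdef, hgdef]
    simp only []
    rw [mul_right_comm, ← Real.rpow_add' (abs_nonneg _) ?he]
    case he =>
      rw [← add_div]
      exact div_ne_zero (by nlinarith) hm0.ne'
    congr 2
    rw [hsdef]
    field_simp
    ring
  have hconj : (m + 1).HolderConjugate ((m + 1) / m) := by
    constructor
    · rw [inv_one, inv_div]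
      field_simp
      ring
    · linarith
    · positivity
  -- Integrability of g via Young
  have hg_int : Integrable g volume := by
    refine Integrable.mono' (hF_int.add hG_int)
      hgmeas.aestronglyMeasurable (Filter.Eventually.of_forall fun x => ?_)
    rw [Real.norm_eq_abs, abs_of_nonneg (hgnn x), ← huv x]
    have hy := Real.young_inequality_of_nonneg (hunn x) (hvnn x) hconj
    have h1 : u x ^ (m + 1) / (m + 1) ≤ F x := by
      rw [← hu_pow x] at *
      exact div_le_self (Real.rpow_nonneg (hunn x) _) (by linarith)
    have h2 : v x ^ ((m + 1) / m) / ((m + 1) / m) ≤ G x := by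
      rw [hv_pow x]
      refine div_le_self (hGnn x) ?_
      rw [le_div_iff₀ (by linarith)]
      linarith
    calc u x * v x ≤ u x ^ (m + 1) / (m + 1) + v x ^ ((m + 1) / m) / ((m + 1) / m) := hy
      _ ≤ F x + G x := add_le_add h1 h2
  -- Memℒp for Hölder
  have hu_mem : MemLp u (ENNReal.ofReal (m + 1)) volume := by
    have hP0 : ENNReal.ofReal (m + 1) ≠ 0 := (ENNReal.ofReal_pos.mpr hm0).ne'
    have hPt : ENNReal.ofReal (m + 1) ≠ ⊤ := ENNReal.ofReal_ne_top
    refine (memLp_norm_rpow_iff humeas.aestronglyMeasurable hP0 hPt).mp ?_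
    rw [ENNReal.div_self hP0 hPt, memLp_one_iff_integrable]
    refine hF_int.congr (Filter.Eventually.of_forall fun x => ?_)
    show F x = ‖u x‖ ^ (ENNReal.ofReal (m + 1)).toReal
    rw [ENNReal.toReal_ofReal (by linarith : (0:ℝ) ≤ m + 1), Real.norm_eq_abs,
      abs_of_nonneg (hunn x)]
    exact (hu_pow x).symm
  have hv_mem : MemLp v (ENNReal.ofReal ((m + 1) / m)) volume := by
    have hq0 : (0:ℝ) < (m + 1) / m := by positivity
    have hP0 : ENNReal.ofReal ((m + 1) / m) ≠ 0 := (ENNReal.ofReal_pos.mpr hq0).ne'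
    have hPt : ENNReal.ofReal ((m + 1) / m) ≠ ⊤ := ENNReal.ofReal_ne_top
    refine (memLp_norm_rpow_iff hvmeas.aestronglyMeasurable hP0 hPt).mp ?_
    rw [ENNReal.div_self hP0 hPt, memLp_one_iff_integrable]
    refine hG_int.congr (Filter.Eventually.of_forall fun x => ?_)
    show G x = ‖v x‖ ^ (ENNReal.ofReal ((m + 1) / m)).toReal
    rw [ENNReal.toReal_ofReal hq0.le, Real.norm_eq_abs, abs_of_nonneg (hvnn x)]
    exact (hv_pow x).symm
  -- Hölder inequality
  have hHolder : (∫ x, g x) ≤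
      (∫ x, F x) ^ (1 / (m + 1)) * (∫ x, G x) ^ (1 / ((m + 1) / m)) := by
    have h := integral_mul_le_Lp_mul_Lq_of_nonneg hconj
      (Filter.Eventually.of_forall hunn) (Filter.Eventually.of_forall hvnn) hu_mem hv_mem
    rw [integral_congr_ae (Filter.Eventually.of_forall huv)] at h
    rw [integral_congr_ae (Filter.Eventually.of_forall hu_pow)] at h
    rw [integral_congr_ae (Filter.Eventually.of_forall hv_pow)] at h
    exact h
  -- the derivative of |w|^s
  set h : ℝ → ℝ := fun x => |w x| ^ s with hhdef
  have hD : ∀ t, HasDerivAt h (((s * |w t| ^ (s - 1)) * Real.sign (w t)) * deriv w t) t := by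
    intro t
    have := (abs_rpow_hasDerivAt hs1 (w t)).comp t (hw t).hasDerivAt
    simpa [Function.comp_def, hhdef] using this
  have hderiv_eq : ∀ t, deriv h t = ((s * |w t| ^ (s - 1)) * Real.sign (w t)) * deriv w t :=
    fun t => (hD t).deriv
  have hDm : Measurable (deriv h) := measurable_deriv h
  have hDbound : ∀ t, |deriv h t| ≤ s * g t := by
    intro t
    rw [hderiv_eq t, hgdef]
    simp only []
    rw [abs_mul, abs_mul, abs_mul]
    rw [abs_of_nonneg hs0.le, abs_of_nonneg (Real.rpow_nonneg (abs_nonneg _) _)]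
    calc s * |w t| ^ (s - 1) * |Real.sign (w t)| * |deriv w t|
        ≤ s * |w t| ^ (s - 1) * 1 * |deriv w t| := by
          refine mul_le_mul_of_nonneg_right (mul_le_mul_of_nonneg_left
            (abs_real_sign_le_one _) (by positivity)) (abs_nonneg _)
      _ = s * (|w t| ^ (s - 1) * |deriv w t|) := by ring
  have hsg_int : Integrable (fun t => s * g t) volume := hg_int.const_mul s
  have hInn : (0:ℝ) ≤ ∫ t, g t := integral_nonneg hgnn
  -- FTC estimate
  have hFTC : ∀ x y : ℝ, h x ≤ h y + s * ∫ t, g t := by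
    intro x y
    have hII : IntervalIntegrable (deriv h) volume y x := by
      rw [intervalIntegrable_iff]
      refine Integrable.mono' hsg_int.integrableOn
        hDm.aestronglyMeasurable.restrict (Filter.Eventually.of_forall fun t => ?_)
      rw [Real.norm_eq_abs]
      exact hDbound t
    have heq := intervalIntegral.integral_eq_sub_of_hasDerivAt
      (f := h) (f' := deriv h) (fun t _ => (hderiv_eq t) ▸ hD t) hII
    have habs : |∫ t in y..x, deriv h t| ≤ s * ∫ t, g t := by
      rw [← Real.norm_eq_abs]
      refine (intervalIntegral.norm_integral_le_integral_norm_uIoc).trans ?_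
      have hstep1 : (∫ t in Set.uIoc y x, ‖deriv h t‖) ≤ ∫ t in Set.uIoc y x, s * g t := by
        refine setIntegral_mono_on ?_ ?_ measurableSet_uIoc fun t _ => ?_
        · exact intervalIntegrable_iff.mp hII.norm
        · exact hsg_int.integrableOn
        · rw [Real.norm_eq_abs]; exact hDbound t
      refine hstep1.trans ?_
      have hstep2 : (∫ t in Set.uIoc y x, s * g t) ≤ ∫ t, s * g t :=
        setIntegral_le_integral hsg_int
          (Filter.Eventually.of_forall fun t => by positivity)
      refine hstep2.trans_eq ?_
      exact integral_const_mul s g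
    have := abs_le.mp habs
    linarith [heq ▸ this.2, this.1]
  -- key pointwise claim
  have hkey : ∀ x, h x ≤ s * ∫ t, g t := by
    intro x
    refine le_of_forall_pos_le_add fun ε hε => ?_
    obtain ⟨y, hy⟩ : ∃ y : ℝ, h y < ε := by
      by_contra hcon
      push_neg at hcon
      have hc : ∀ y : ℝ, (ε ^ s⁻¹) ^ 2 ≤ w y ^ 2 := by
        intro y
        have h1 : ε ^ s⁻¹ ≤ |w y| := by
          have h2 : ε ^ s⁻¹ ≤ (|w y| ^ s) ^ s⁻¹ :=
            Real.rpow_le_rpow hε.le (hcon y) (by positivity : (0:ℝ) ≤ s⁻¹)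
          rwa [Real.rpow_rpow_inv (abs_nonneg _) hs0.ne'] at h2
        calc (ε ^ s⁻¹) ^ 2 ≤ |w y| ^ 2 := by
              exact pow_le_pow_left₀ (by positivity) h1 2
          _ = w y ^ 2 := sq_abs _
      have hci : Integrable (fun _ : ℝ => (ε ^ s⁻¹) ^ 2) volume := by
        refine Integrable.mono' hw2.integrable_sq aestronglyMeasurable_const
          (Filter.Eventually.of_forall fun y => ?_)
        rw [Real.norm_eq_abs, abs_of_nonneg (by positivity)]
        exact hc y
      rw [integrable_const_iff] at hci
      rcases hci with hci | hci
      · have : (0:ℝ) < (ε ^ s⁻¹) ^ 2 := by positivity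
        rw [hci] at this; exact lt_irrefl 0 this
      · exact measure_ne_top (volume : Measure ℝ) Set.univ Real.volume_univ
    have := hFTC x y
    linarith
  -- assemble
  set A : ℝ := ∫ x, F x with hAdef
  set B : ℝ := ∫ x, G x with hBdef
  have hA0 : 0 ≤ A := integral_nonneg hFnn
  have hB0 : 0 ≤ B := integral_nonneg hGnn
  have hsI0 : (0:ℝ) ≤ s * ∫ t, g t := mul_nonneg hs0.le hInn
  have hbdd : BddAbove (Set.range fun x => |w x|) := ⟨K, by rintro _ ⟨x, rfl⟩; exact (hK x).1⟩
  set X : ℝ := ⨆ x : ℝ, |w x| with hXdef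
  have hX0 : (0:ℝ) ≤ X := (abs_nonneg (w 0)).trans (le_ciSup hbdd 0)
  have hXs : X ^ s ≤ s * ∫ t, g t := by
    have hXle : X ≤ (s * ∫ t, g t) ^ s⁻¹ := by
      refine ciSup_le fun x => ?_
      have h2 : (|w x| ^ s) ^ s⁻¹ ≤ (s * ∫ t, g t) ^ s⁻¹ :=
        Real.rpow_le_rpow (Real.rpow_nonneg (abs_nonneg _) s) (hkey x) (by positivity)
      rwa [Real.rpow_rpow_inv (abs_nonneg _) hs0.ne'] at h2
    calc X ^ s ≤ ((s * ∫ t, g t) ^ s⁻¹) ^ s := Real.rpow_le_rpow hX0 hXle hs0.le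
      _ = s * ∫ t, g t := Real.rpow_inv_rpow hsI0 hs0.ne'
  have hfinal : X ^ ((m + p - 1) / (m + 1)) ≤
      s ^ ν * A ^ (ν / (m + 1)) * (B ^ (1 / p)) ^ ((m + p - 1) * (1 - ν) / (m + 1)) := by
    have hc1 : X ^ ((m + p - 1) / (m + 1)) = (X ^ s) ^ ν := by
      rw [← Real.rpow_mul hX0, hsν]
    rw [hc1]
    calc (X ^ s) ^ ν ≤ (s * ∫ t, g t) ^ ν :=
          Real.rpow_le_rpow (Real.rpow_nonneg hX0 s) hXs hν0.le
      _ ≤ (s * (A ^ (1 / (m + 1)) * B ^ (1 / ((m + 1) / m)))) ^ ν := by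
          refine Real.rpow_le_rpow hsI0 ?_ hν0.le
          exact mul_le_mul_of_nonneg_left hHolder hs0.le
      _ = s ^ ν * ((A ^ (1 / (m + 1))) ^ ν * (B ^ (1 / ((m + 1) / m))) ^ ν) := by
          rw [Real.mul_rpow hs0.le (by positivity),
            Real.mul_rpow (by positivity) (by positivity)]
      _ = s ^ ν * A ^ (ν / (m + 1)) * (B ^ (1 / p)) ^ ((m + p - 1) * (1 - ν) / (m + 1)) := by
          rw [← Real.rpow_mul hA0, ← Real.rpow_mul hB0, ← Real.rpow_mul hB0]
          rw [show 1 / (m + 1) * ν = ν / (m + 1) by ring]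
          rw [show 1 / ((m + 1) / m) * ν = 1 / p * ((m + p - 1) * (1 - ν) / (m + 1)) by
            rw [hνdef]; field_simp [show m * (p + 1) + p - 1 ≠ 0 by linarith]; ring]
          ring
  exact hfinal
end

section
/- Let φ ∈ W^{1,∞}(ℝ) ∩ L²(ℝ) and suppose Φ(x) = ∫_{-∞}^x φ(y) dy is well-defined with Φ ∈ L^p(ℝ) for some p ≥ 2. Then ‖φ‖_{L^∞} ≤ C·‖φ'‖_{L^∞}^{(p+1)/(2p+1)}·‖Φ‖_{L^p}^{p/(2p+1)} for a constant C depending only on p. -/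
open MeasureTheory Set

private lemma key_lemma (p A : ℝ) (hp : 2 ≤ p) (hA : 0 < A) (φ : ℝ → ℝ)
    (hlip : ∀ x y : ℝ, |φ x - φ y| ≤ A * |x - y|)
    (hint : Integrable φ (volume : Measure ℝ))
    (hintp : Integrable (fun x : ℝ => |∫ y in Iic x, φ y| ^ p) (volume : Measure ℝ))
    (x₀ : ℝ) (hm : 0 < φ x₀) :
    (φ x₀) ^ (2 * p + 1) ≤
      (32 : ℝ) ^ p * 48 * A ^ (p + 1) * ∫ x : ℝ, |∫ y in Iic x, φ y| ^ p := by
  set m := φ x₀ with hmdef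
  set ℓ := m / (2 * A) with hℓdef
  set Φ : ℝ → ℝ := fun x => ∫ y in Iic x, φ y with hΦdef
  set B := ∫ x : ℝ, |Φ x| ^ p with hBdef
  have hℓ : 0 < ℓ := by positivity
  have hAl : A * ℓ = m / 2 := by rw [hℓdef]; field_simp
  have hp0 : 0 ≤ p := by linarith
  -- pointwise bounds on φ near x₀
  have h1 : ∀ x ∈ Icc x₀ (x₀ + ℓ), m / 2 ≤ φ x ∧ φ x ≤ 3 * m / 2 := by
    intro x hx
    have h := hlip x x₀
    have hxd : |x - x₀| ≤ ℓ := by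
      rw [abs_le]; constructor <;> [linarith [hx.1]; linarith [hx.2]]
    have : |φ x - m| ≤ m / 2 := by
      calc |φ x - m| ≤ A * |x - x₀| := h
        _ ≤ A * ℓ := by nlinarith [abs_nonneg (x - x₀)]
        _ = m / 2 := hAl
    rw [abs_le] at this
    constructor <;> linarith [this.1, this.2]
  -- Φ difference as interval integral
  have hΦsub : ∀ x : ℝ, Φ x - Φ x₀ = ∫ t in x₀..x, φ t := fun x =>
    intervalIntegral.integral_Iic_sub_Iic hint.integrableOn hint.integrableOn
  have h2 : ∀ x ∈ Icc x₀ (x₀ + ℓ),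
      Φ x₀ + (m / 2) * (x - x₀) ≤ Φ x ∧ Φ x ≤ Φ x₀ + (3 * m / 2) * (x - x₀) := by
    intro x hx
    have hx1 : x₀ ≤ x := hx.1
    have hlow : (m / 2) * (x - x₀) ≤ ∫ t in x₀..x, φ t := by
      have := intervalIntegral.integral_mono_on (μ := volume) hx1
        (intervalIntegrable_const (c := m / 2)) hint.intervalIntegrable
        (fun t ht => (h1 t ⟨ht.1, ht.2.trans hx.2⟩).1)
      rwa [intervalIntegral.integral_const, smul_eq_mul, mul_comm] at this
    have hhigh : (∫ t in x₀..x, φ t) ≤ (3 * m / 2) * (x - x₀) := by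
      have := intervalIntegral.integral_mono_on (μ := volume) hx1
        hint.intervalIntegrable (intervalIntegrable_const (c := 3 * m / 2))
        (fun t ht => (h1 t ⟨ht.1, ht.2.trans hx.2⟩).2)
      rwa [intervalIntegral.integral_const, smul_eq_mul, mul_comm] at this
    have := hΦsub x
    constructor <;> linarith
  -- find an interval where |Φ| is large
  obtain ⟨a, ha⟩ : ∃ a : ℝ, ∀ x ∈ Icc a (a + ℓ / 24), m * ℓ / 16 ≤ |Φ x| := by
    rcases le_or_gt (-(m * ℓ / 8)) (Φ x₀) with hc | hc
    · refine ⟨x₀ + ℓ / 2, fun x hx => ?_⟩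
      have hx' : x ∈ Icc x₀ (x₀ + ℓ) := ⟨by linarith [hx.1], by linarith [hx.2]⟩
      have := (h2 x hx').1
      have hxl : ℓ / 2 ≤ x - x₀ := by linarith [hx.1]
      have : m * ℓ / 16 ≤ Φ x := by nlinarith
      exact this.trans (le_abs_self _)
    · refine ⟨x₀, fun x hx => ?_⟩
      have hx' : x ∈ Icc x₀ (x₀ + ℓ) := ⟨hx.1, by linarith [hx.2]⟩
      have := (h2 x hx').2
      have hxl : x - x₀ ≤ ℓ / 24 := by linarith [hx.2]
      have hxl0 : 0 ≤ x - x₀ := by linarith [hx.1]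
      have : Φ x ≤ -(m * ℓ / 16) := by nlinarith
      calc m * ℓ / 16 ≤ -Φ x := by linarith
        _ ≤ |Φ x| := neg_le_abs _
  -- integral lower bound
  have hJm : (volume (Icc a (a + ℓ / 24))).toReal = ℓ / 24 := by
    rw [Real.volume_Icc]
    rw [ENNReal.toReal_ofReal (by linarith)]
    ring
  have hlb : (m * ℓ / 16) ^ p * (ℓ / 24) ≤ B := by
    have hnn : 0 ≤ᵐ[volume] fun x : ℝ => |Φ x| ^ p :=
      Filter.Eventually.of_forall fun x => Real.rpow_nonneg (abs_nonneg _) p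
    have hle1 : ∫ x in Icc a (a + ℓ / 24), |Φ x| ^ p ≤ B :=
      setIntegral_le_integral hintp hnn
    have hle2 : (m * ℓ / 16) ^ p * (ℓ / 24) ≤ ∫ x in Icc a (a + ℓ / 24), |Φ x| ^ p := by
      have := setIntegral_ge_of_const_le (μ := volume) (c := (m * ℓ / 16) ^ p)
        measurableSet_Icc
        (by rw [Real.volume_Icc]; exact ENNReal.ofReal_ne_top)
        (fun x hx => Real.rpow_le_rpow (by positivity) (ha x hx) hp0)
        hintp.integrableOn
      rwa [measureReal_def, hJm, smul_eq_mul, mul_comm] at this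
    linarith
  -- algebra
  have e1 : m * ℓ / 16 = m ^ 2 / (32 * A) := by rw [hℓdef]; field_simp; ring
  have e2 : ℓ / 24 = m / (48 * A) := by rw [hℓdef]; ring
  rw [e1, e2] at hlb
  have hD : (0:ℝ) ≤ (32 : ℝ) ^ p * 48 * A ^ (p + 1) := by positivity
  have e3 : (32 : ℝ) ^ p * 48 * A ^ (p + 1) * ((m ^ 2 / (32 * A)) ^ p * (m / (48 * A)))
      = m ^ (2 * p + 1) := by
    have h32A : (0:ℝ) < 32 * A := by linarith
    rw [Real.div_rpow (by positivity) h32A.le,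
      Real.mul_rpow (by norm_num : (0:ℝ) ≤ 32) hA.le,
      Real.rpow_add hA, Real.rpow_one, Real.rpow_add hm, Real.rpow_one]
    have hsq : (m ^ 2 : ℝ) ^ p = m ^ (2 * p) := by
      rw [← Real.rpow_natCast m 2, ← Real.rpow_mul hm.le]
      norm_num
    rw [hsq]
    have h32p : (0:ℝ) < (32:ℝ) ^ p := Real.rpow_pos_of_pos (by norm_num) p
    have hAp : (0:ℝ) < A ^ p := Real.rpow_pos_of_pos hA p
    field_simp
  calc m ^ (2 * p + 1)
      = (32 : ℝ) ^ p * 48 * A ^ (p + 1) * ((m ^ 2 / (32 * A)) ^ p * (m / (48 * A))) := e3.symm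
    _ ≤ (32 : ℝ) ^ p * 48 * A ^ (p + 1) * B := by
        apply mul_le_mul_of_nonneg_left hlb hD

/-- Interpolation inequality (4.16) of the paper: for `φ ∈ W^{1,∞} ∩ L²` with
antiderivative `Φ(x) = ∫_{-∞}^x φ` in `L^p`, `p ≥ 2`,
`‖φ‖_∞ ≤ C ‖φ'‖_∞^{(p+1)/(2p+1)} ‖Φ‖_p^{p/(2p+1)}`;
note `‖Φ‖_p^{p/(2p+1)} = (∫ |Φ|^p)^{1/(2p+1)}`. -/
theorem stmt_16 (p : ℝ) (hp : 2 ≤ p) :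
    ∃ C : ℝ, 0 < C ∧
      ∀ φ : ℝ → ℝ, Differentiable ℝ φ →
        MemLp φ 2 (volume : Measure ℝ) →
        (∃ K : ℝ, ∀ x : ℝ, |φ x| ≤ K ∧ |deriv φ x| ≤ K) →
        Integrable φ (volume : Measure ℝ) →
        Integrable (fun x : ℝ => |∫ y in Iic x, φ y| ^ p) (volume : Measure ℝ) →
        (⨆ x : ℝ, |φ x|) ≤
          C * (⨆ x : ℝ, |deriv φ x|) ^ ((p + 1) / (2 * p + 1)) *
            (∫ x : ℝ, |∫ y in Iic x, φ y| ^ p) ^ (1 / (2 * p + 1)) := by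
  have hq : (0:ℝ) < 2 * p + 1 := by linarith
  refine ⟨((32 : ℝ) ^ p * 48) ^ (1 / (2 * p + 1)), by positivity, ?_⟩
  intro φ hdiff _hmem ⟨K, hK⟩ hint hintp
  set A := ⨆ x : ℝ, |deriv φ x| with hAdef
  set B := ∫ x : ℝ, |∫ y in Iic x, φ y| ^ p with hBdef
  have hbdd : BddAbove (range fun x : ℝ => |deriv φ x|) :=
    ⟨K, fun y ⟨x, hx⟩ => hx ▸ (hK x).2⟩
  have hAx : ∀ x : ℝ, |deriv φ x| ≤ A := fun x => le_ciSup hbdd x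
  have hA0 : 0 ≤ A := (abs_nonneg _).trans (hAx 0)
  have hB0 : 0 ≤ B := integral_nonneg fun x => Real.rpow_nonneg (abs_nonneg _) p
  rcases hA0.lt_or_eq with hA | hA
  · -- A > 0 : Lipschitz bound
    have hlip : ∀ x y : ℝ, |φ x - φ y| ≤ A * |x - y| := by
      have hLW : LipschitzWith A.toNNReal φ := by
        apply lipschitzWith_of_nnnorm_deriv_le hdiff
        intro x
        rw [← NNReal.coe_le_coe, coe_nnnorm, Real.coe_toNNReal _ hA0]
        exact hAx x
      intro x y
      have := hLW.dist_le_mul x y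
      rwa [Real.dist_eq, Real.dist_eq, Real.coe_toNNReal _ hA0] at this
    apply ciSup_le
    intro x₀
    have hRHS0 : 0 ≤ ((32 : ℝ) ^ p * 48) ^ (1 / (2 * p + 1)) *
        A ^ ((p + 1) / (2 * p + 1)) * B ^ (1 / (2 * p + 1)) := by
      have := Real.rpow_nonneg hA0 ((p + 1) / (2 * p + 1))
      have := Real.rpow_nonneg hB0 (1 / (2 * p + 1))
      positivity
    have final : ∀ m : ℝ, 0 < m → m ^ (2 * p + 1) ≤ (32 : ℝ) ^ p * 48 * A ^ (p + 1) * B →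
        m ≤ ((32 : ℝ) ^ p * 48) ^ (1 / (2 * p + 1)) *
          A ^ ((p + 1) / (2 * p + 1)) * B ^ (1 / (2 * p + 1)) := by
      intro m hm h
      have h1 : (m ^ (2 * p + 1)) ^ (1 / (2 * p + 1)) ≤
          ((32 : ℝ) ^ p * 48 * A ^ (p + 1) * B) ^ (1 / (2 * p + 1)) :=
        Real.rpow_le_rpow (Real.rpow_nonneg hm.le _) h (by positivity)
      have h2 : (m ^ (2 * p + 1)) ^ (1 / (2 * p + 1)) = m := by
        rw [← Real.rpow_mul hm.le, mul_one_div_cancel hq.ne', Real.rpow_one]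
      have h3 : ((32 : ℝ) ^ p * 48 * A ^ (p + 1) * B) ^ (1 / (2 * p + 1)) =
          ((32 : ℝ) ^ p * 48) ^ (1 / (2 * p + 1)) *
            A ^ ((p + 1) / (2 * p + 1)) * B ^ (1 / (2 * p + 1)) := by
        rw [Real.mul_rpow (by positivity) hB0,
          Real.mul_rpow (by positivity) (Real.rpow_nonneg hA0 _),
          ← Real.rpow_mul hA0]
        ring_nf
      rw [h2, h3] at h1
      exact h1
    rcases lt_trichotomy (φ x₀) 0 with hs | hs | hs
    · have hkey := key_lemma p A hp hA (fun x => -φ x)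
        (fun x y => by rw [show -φ x - -φ y = -(φ x - φ y) by ring, abs_neg]; exact hlip x y)
        hint.neg
        (by
          have : (fun x : ℝ => |∫ y in Iic x, -φ y| ^ p) =
              fun x : ℝ => |∫ y in Iic x, φ y| ^ p := by
            funext x; rw [integral_neg, abs_neg]
          rw [this]; exact hintp)
        x₀ (by simpa using hs)
      have heq : (∫ x : ℝ, |∫ y in Iic x, -φ y| ^ p) = B := by
        apply integral_congr_ae
        filter_upwards with x
        rw [integral_neg, abs_neg]
      rw [heq] at hkey
      have : |φ x₀| = -φ x₀ := abs_of_neg hs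
      rw [this]
      exact final _ (by simpa using hs) hkey
    · rw [hs, abs_zero]; exact hRHS0
    · have hkey := key_lemma p A hp hA φ hlip hint hintp x₀ hs
      rw [abs_of_pos hs]
      exact final _ hs hkey
  · -- A = 0 : φ is constant, hence zero
    have hderiv : ∀ x : ℝ, deriv φ x = 0 := fun x =>
      abs_eq_zero.mp (le_antisymm (hA ▸ hAx x) (abs_nonneg _))
    have hconst : ∀ x : ℝ, φ x = φ 0 := fun x =>
      is_const_of_deriv_eq_zero hdiff hderiv x 0
    have hzero : φ 0 = 0 := by
      have hic : Integrable (fun _ : ℝ => φ 0) (volume : Measure ℝ) :=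
        hint.congr (Filter.Eventually.of_forall fun x => (hconst x))
      rcases (integrable_const_iff).mp hic with h | h
      · exact h
      · exfalso; have h := h.measure_univ_lt_top; rw [Real.volume_univ] at h; exact (lt_irrefl _ h).elim
    have hφ0 : ∀ x : ℝ, φ x = 0 := fun x => (hconst x).trans hzero
    have hL : (⨆ x : ℝ, |φ x|) = 0 := by simp [hφ0]
    rw [hL]
    have := Real.rpow_nonneg hA0 ((p + 1) / (2 * p + 1))
    have := Real.rpow_nonneg hB0 (1 / (2 * p + 1))
    positivity
end
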